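/- arXiv:1907.00152 — 3 statements merged into one kernel-verified Lean document; each statement's English description precedes it below -/
import Mathlib

section
/- Let Λ=(λ₁,…,λₙ) be a multiweight, μ > 0, and let f be a C^∞-smooth function on a neighborhood of 0 in ℂⁿ with f ∈ O(μ,Λ). Then for every pair of multi-indices p, q ∈ ℕⁿ with wt(p) + wt(q) < μ there exist constants C > 0 and δ > 0 such that |D^p D̄^q f(z)| ≤ C (σ_Λ(z))^{μ − wt(p) − wt(q) + δ} for all z in some neighborhood of 0. -/
/- Wirtinger derivatives on smooth functions ℂⁿ → ℂ. -/
noncomputable def wD {n : ℕ} (j : Fin n) (f : (Fin n → ℂ) → ℂ) : (Fin n → ℂ) → ℂ :=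
  fun z => (1/2 : ℂ) *
    (fderiv ℝ f z (Pi.single j 1) - Complex.I * fderiv ℝ f z (Pi.single j Complex.I))

noncomputable def wDbar {n : ℕ} (j : Fin n) (f : (Fin n → ℂ) → ℂ) : (Fin n → ℂ) → ℂ :=
  fun z => (1/2 : ℂ) *
    (fderiv ℝ f z (Pi.single j 1) + Complex.I * fderiv ℝ f z (Pi.single j Complex.I))

/-- Iterated Wirtinger derivative `D^p`. -/
noncomputable def wDmulti {n : ℕ} (p : Fin n → ℕ) (f : (Fin n → ℂ) → ℂ) : (Fin n → ℂ) → ℂ :=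
  (List.finRange n).foldr (fun j g => (wD j)^[p j] g) f

/-- Iterated Wirtinger derivative `D̄^q`. -/
noncomputable def wDbarMulti {n : ℕ} (q : Fin n → ℕ) (f : (Fin n → ℂ) → ℂ) : (Fin n → ℂ) → ℂ :=
  (List.finRange n).foldr (fun j g => (wDbar j)^[q j] g) f

/-- `f ∈ O(μ,Λ)` : all derivatives `D^α D̄^β f` of weight `≤ μ` vanish at the origin. -/
def memO {n : ℕ} (Λ : Fin n → ℝ) (μ : ℝ) (f : (Fin n → ℂ) → ℂ) : Prop :=
  ∀ α β : Fin n → ℕ, (∑ j, ((α j + β j : ℕ) : ℝ) * Λ j) ≤ μ →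
    wDmulti α (wDbarMulti β f) 0 = 0

/-- `σ_Λ(z) = Σ_j |z_j|^(1/λ_j)`. -/
noncomputable def sigmaL {n : ℕ} (Λ : Fin n → ℝ) (z : Fin n → ℂ) : ℝ :=
  ∑ j, ‖z j‖ ^ (1 / Λ j)

/-- `wt(p) = Σ_j p_j λ_j`. -/
noncomputable def wtL {n : ℕ} (Λ : Fin n → ℝ) (p : Fin n → ℕ) : ℝ :=
  ∑ j, (p j : ℝ) * Λ j

noncomputable def dirD {n : ℕ} (u : Fin n → ℂ) (g : (Fin n → ℂ) → ℂ) : (Fin n → ℂ) → ℂ :=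
  fun z => fderiv ℝ g z u

lemma dirD_contDiffOn {n : ℕ} (u : Fin n → ℂ) {g : (Fin n → ℂ) → ℂ} {U : Set (Fin n → ℂ)}
    (hg : ContDiffOn ℝ (⊤ : ℕ∞) g U) (hU : IsOpen U) : ContDiffOn ℝ (⊤ : ℕ∞) (dirD u g) U := by
  have h1 : ContDiffOn ℝ (⊤ : ℕ∞) (fderiv ℝ g) U := hg.fderiv_of_isOpen hU (by simp)
  exact (ContinuousLinearMap.apply ℝ ℂ u).contDiff.comp_contDiffOn h1

lemma wD_eq_dirD {n : ℕ} (j : Fin n) (f : (Fin n → ℂ) → ℂ) :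
    wD j f = fun z => (1/2 : ℂ) * dirD (Pi.single j 1) f z
      + (-(Complex.I/2)) * dirD (Pi.single j Complex.I) f z := by
  funext z; simp [wD, dirD]; ring

lemma wDbar_eq_dirD {n : ℕ} (j : Fin n) (f : (Fin n → ℂ) → ℂ) :
    wDbar j f = fun z => (1/2 : ℂ) * dirD (Pi.single j 1) f z
      + (Complex.I/2) * dirD (Pi.single j Complex.I) f z := by
  funext z; simp [wDbar, dirD]; ring

lemma wD_contDiffOn {n : ℕ} (j : Fin n) {g : (Fin n → ℂ) → ℂ} {U : Set (Fin n → ℂ)}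
    (hg : ContDiffOn ℝ (⊤ : ℕ∞) g U) (hU : IsOpen U) : ContDiffOn ℝ (⊤ : ℕ∞) (wD j g) U := by
  rw [wD_eq_dirD]
  exact (contDiffOn_const.mul (dirD_contDiffOn _ hg hU)).add
    (contDiffOn_const.mul (dirD_contDiffOn _ hg hU))

lemma wDbar_contDiffOn {n : ℕ} (j : Fin n) {g : (Fin n → ℂ) → ℂ} {U : Set (Fin n → ℂ)}
    (hg : ContDiffOn ℝ (⊤ : ℕ∞) g U) (hU : IsOpen U) : ContDiffOn ℝ (⊤ : ℕ∞) (wDbar j g) U := by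
  rw [wDbar_eq_dirD]
  exact (contDiffOn_const.mul (dirD_contDiffOn _ hg hU)).add
    (contDiffOn_const.mul (dirD_contDiffOn _ hg hU))

/-- `dirD` of a linear combination. -/
lemma dirD_comb {n : ℕ} (u : Fin n → ℂ) (a b : ℂ) {g h : (Fin n → ℂ) → ℂ}
    {z : Fin n → ℂ} (hg : DifferentiableAt ℝ g z) (hh : DifferentiableAt ℝ h z) :
    dirD u (fun x => a * g x + b * h x) z = a * dirD u g z + b * dirD u h z := by
  simp only [dirD]
  have : fderiv ℝ (fun x => a * g x + b * h x) z =
      a • fderiv ℝ g z + b • fderiv ℝ h z := by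
    rw [fderiv_fun_add ((hg.const_mul a)) ((hh.const_mul b)), fderiv_const_mul hg, fderiv_const_mul hh]
  rw [this]; simp [smul_eq_mul]

/-- symmetry of mixed directional derivatives for smooth functions on open sets -/
lemma dirD_symm {n : ℕ} {f : (Fin n → ℂ) → ℂ} {U : Set (Fin n → ℂ)}
    (hf : ContDiffOn ℝ (⊤ : ℕ∞) f U) (hU : IsOpen U) (u v : Fin n → ℂ) {z : Fin n → ℂ} (hz : z ∈ U) :
    dirD u (dirD v f) z = dirD v (dirD u f) z := by
  have hat : ContDiffAt ℝ (⊤ : ℕ∞) f z := (hf z hz).contDiffAt (hU.mem_nhds hz)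
  have hsymm : IsSymmSndFDerivAt ℝ f z := hat.isSymmSndFDerivAt (by rw [minSmoothness_of_isRCLikeNormedField]; exact WithTop.coe_le_coe.2 (le_top : (2:ℕ∞) ≤ ⊤))
  have hd2 : DifferentiableAt ℝ (fderiv ℝ f) z :=
    (hat.fderiv_right (m := 1) (by exact WithTop.coe_le_coe.2 le_top)).differentiableAt one_ne_zero
  have key : ∀ w : Fin n → ℂ, fderiv ℝ (fun x => fderiv ℝ f x w) z =
      (ContinuousLinearMap.apply ℝ ℂ w).comp (fderiv ℝ (fderiv ℝ f) z) := by
    intro w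
    exact (ContinuousLinearMap.apply ℝ ℂ w).hasFDerivAt.comp z hd2.hasFDerivAt |>.fderiv
  show (fderiv ℝ (fun x => fderiv ℝ f x v) z) u = (fderiv ℝ (fun x => fderiv ℝ f x u) z) v
  rw [key v, key u]
  simpa using hsymm u v
noncomputable def wOp {n : ℕ} (o : Fin n × Bool) (g : (Fin n → ℂ) → ℂ) : (Fin n → ℂ) → ℂ :=
  if o.2 then wD o.1 g else wDbar o.1 g

noncomputable def wApply {n : ℕ} (L : List (Fin n × Bool)) (f : (Fin n → ℂ) → ℂ) :
    (Fin n → ℂ) → ℂ := L.foldr wOp f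

noncomputable def wEps {n : ℕ} (o : Fin n × Bool) : ℂ :=
  if o.2 then -(Complex.I/2) else Complex.I/2

lemma wOp_eq_dirD {n : ℕ} (o : Fin n × Bool) (g : (Fin n → ℂ) → ℂ) :
    wOp o g = fun z => (1/2 : ℂ) * dirD (Pi.single o.1 1) g z
      + wEps o * dirD (Pi.single o.1 Complex.I) g z := by
  rcases o with ⟨j, b⟩
  cases b <;> simp [wOp, wEps, wD_eq_dirD, wDbar_eq_dirD]

lemma wOp_contDiffOn {n : ℕ} (o : Fin n × Bool) {g : (Fin n → ℂ) → ℂ} {U : Set (Fin n → ℂ)}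
    (hg : ContDiffOn ℝ (⊤ : ℕ∞) g U) (hU : IsOpen U) : ContDiffOn ℝ (⊤ : ℕ∞) (wOp o g) U := by
  rcases o with ⟨j, b⟩
  cases b
  · exact wDbar_contDiffOn j hg hU
  · exact wD_contDiffOn j hg hU

lemma wApply_contDiffOn {n : ℕ} (L : List (Fin n × Bool)) {f : (Fin n → ℂ) → ℂ}
    {U : Set (Fin n → ℂ)} (hf : ContDiffOn ℝ (⊤ : ℕ∞) f U) (hU : IsOpen U) :
    ContDiffOn ℝ (⊤ : ℕ∞) (wApply L f) U := by
  induction L with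
  | nil => exact hf
  | cons o L IH => exact wOp_contDiffOn o IH hU

lemma wOp_congr {n : ℕ} (o : Fin n × Bool) {g h : (Fin n → ℂ) → ℂ} {U : Set (Fin n → ℂ)}
    (hU : IsOpen U) (hgh : ∀ x ∈ U, g x = h x) {z : Fin n → ℂ} (hz : z ∈ U) :
    wOp o g z = wOp o h z := by
  have he : g =ᶠ[nhds z] h := Filter.eventuallyEq_of_mem (hU.mem_nhds hz) hgh
  have hfd := he.fderiv_eq (𝕜 := ℝ)
  rcases o with ⟨j, b⟩
  cases b <;> simp [wOp, wD, wDbar, hfd]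

lemma wOp_swap {n : ℕ} (a b : Fin n × Bool) {f : (Fin n → ℂ) → ℂ} {U : Set (Fin n → ℂ)}
    (hf : ContDiffOn ℝ (⊤ : ℕ∞) f U) (hU : IsOpen U) {z : Fin n → ℂ} (hz : z ∈ U) :
    wOp a (wOp b f) z = wOp b (wOp a f) z := by
  have hdiff : ∀ u : Fin n → ℂ, DifferentiableAt ℝ (dirD u f) z := fun u =>
    ((dirD_contDiffOn u hf hU).contDiffAt (hU.mem_nhds hz)).differentiableAt (by simp)
  have hcomb : ∀ (o : Fin n × Bool) (u : Fin n → ℂ),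
      dirD u (wOp o f) z = (1/2 : ℂ) * dirD u (dirD (Pi.single o.1 1) f) z
        + wEps o * dirD u (dirD (Pi.single o.1 Complex.I) f) z := by
    intro o u
    rw [wOp_eq_dirD]
    exact dirD_comb u _ _ (hdiff _) (hdiff _)
  rw [wOp_eq_dirD a (wOp b f), wOp_eq_dirD b (wOp a f)]
  simp only [hcomb]
  rw [dirD_symm hf hU (Pi.single a.1 1) (Pi.single b.1 1) hz,
    dirD_symm hf hU (Pi.single a.1 1) (Pi.single b.1 Complex.I) hz,
    dirD_symm hf hU (Pi.single a.1 Complex.I) (Pi.single b.1 1) hz,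
    dirD_symm hf hU (Pi.single a.1 Complex.I) (Pi.single b.1 Complex.I) hz]
  ring

lemma wApply_perm {n : ℕ} {L L' : List (Fin n × Bool)} (hp : L.Perm L')
    {f : (Fin n → ℂ) → ℂ} {U : Set (Fin n → ℂ)}
    (hf : ContDiffOn ℝ (⊤ : ℕ∞) f U) (hU : IsOpen U) :
    ∀ z ∈ U, wApply L f z = wApply L' f z := by
  induction hp with
  | nil => intro z _; rfl
  | cons o _ IH =>
      intro z hz
      exact wOp_congr o hU IH hz
  | swap x y l =>
      intro z hz
      exact wOp_swap y x (wApply_contDiffOn l hf hU) hU hz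
  | trans _ _ IH1 IH2 =>
      intro z hz
      exact (IH1 z hz).trans (IH2 z hz)
noncomputable def wtOps {n : ℕ} (Λ : Fin n → ℝ) (L : List (Fin n × Bool)) : ℝ :=
  (L.map (fun o => Λ o.1)).sum

lemma wtOps_cons {n : ℕ} (Λ : Fin n → ℝ) (o : Fin n × Bool) (L : List (Fin n × Bool)) :
    wtOps Λ (o :: L) = Λ o.1 + wtOps Λ L := by simp [wtOps]

lemma wtOps_append {n : ℕ} (Λ : Fin n → ℝ) (L L' : List (Fin n × Bool)) :
    wtOps Λ (L ++ L') = wtOps Λ L + wtOps Λ L' := by simp [wtOps]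

lemma wtOps_perm {n : ℕ} (Λ : Fin n → ℝ) {L L' : List (Fin n × Bool)} (hp : L.Perm L') :
    wtOps Λ L = wtOps Λ L' := List.Perm.sum_eq (hp.map _)

def canonHalf {n : ℕ} (α : Fin n → ℕ) (b : Bool) : List (Fin n × Bool) :=
  (List.finRange n).flatMap fun j => List.replicate (α j) (j, b)

def canonList {n : ℕ} (α β : Fin n → ℕ) : List (Fin n × Bool) :=
  canonHalf α true ++ canonHalf β false

lemma wApply_append {n : ℕ} (L L' : List (Fin n × Bool)) (f : (Fin n → ℂ) → ℂ) :
    wApply (L ++ L') f = wApply L (wApply L' f) := List.foldr_append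

lemma wApply_replicate_true {n : ℕ} (j : Fin n) (k : ℕ) (g : (Fin n → ℂ) → ℂ) :
    wApply (List.replicate k (j, true)) g = (wD j)^[k] g := by
  induction k with
  | zero => rfl
  | succ k IH =>
      rw [List.replicate_succ, Function.iterate_succ_apply']
      show wOp (j, true) (wApply (List.replicate k (j, true)) g) = _
      rw [IH]; rfl

lemma wApply_replicate_false {n : ℕ} (j : Fin n) (k : ℕ) (g : (Fin n → ℂ) → ℂ) :
    wApply (List.replicate k (j, false)) g = (wDbar j)^[k] g := by
  induction k with
  | zero => rfl
  | succ k IH =>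
      rw [List.replicate_succ, Function.iterate_succ_apply']
      show wOp (j, false) (wApply (List.replicate k (j, false)) g) = _
      rw [IH]; rfl

lemma wDmulti_eq_wApply {n : ℕ} (α : Fin n → ℕ) (g : (Fin n → ℂ) → ℂ) :
    wDmulti α g = wApply (canonHalf α true) g := by
  unfold wDmulti canonHalf
  generalize List.finRange n = l
  induction l with
  | nil => rfl
  | cons j l IH =>
      rw [List.foldr_cons, IH, List.flatMap_cons, wApply_append, wApply_replicate_true]

lemma wDbarMulti_eq_wApply {n : ℕ} (β : Fin n → ℕ) (g : (Fin n → ℂ) → ℂ) :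
    wDbarMulti β g = wApply (canonHalf β false) g := by
  unfold wDbarMulti canonHalf
  generalize List.finRange n = l
  induction l with
  | nil => rfl
  | cons j l IH =>
      rw [List.foldr_cons, IH, List.flatMap_cons, wApply_append, wApply_replicate_false]

lemma canon_eq {n : ℕ} (α β : Fin n → ℕ) (f : (Fin n → ℂ) → ℂ) :
    wDmulti α (wDbarMulti β f) = wApply (canonList α β) f := by
  rw [wDmulti_eq_wApply, wDbarMulti_eq_wApply, canonList, wApply_append]

lemma count_canonHalf {n : ℕ} (α : Fin n → ℕ) (b : Bool) (e : Fin n × Bool) :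
    Multiset.count e (↑(canonHalf α b) : Multiset (Fin n × Bool)) = if e.2 = b then α e.1 else 0 := by
  unfold canonHalf
  have h1 : ∀ l : List (Fin n),
      Multiset.count e (↑(l.flatMap fun j => List.replicate (α j) (j, b)) : Multiset (Fin n × Bool))
        = (l.map fun j => if e = (j, b) then α j else 0).sum := by
    intro l
    induction l with
    | nil => rfl
    | cons j l IH =>
        rw [List.flatMap_cons, ← Multiset.coe_add, Multiset.count_add, IH, List.map_cons,
          List.sum_cons, Multiset.coe_replicate, Multiset.count_replicate]
        congr 1
        by_cases h : e = (j, b)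
        · rw [if_pos h, if_pos h.symm]
        · rw [if_neg h, if_neg (fun hh => h hh.symm)]
  rw [h1]
  rw [← Fin.sum_univ_def]
  rcases e with ⟨i, c⟩
  by_cases h : c = b
  · subst h
    have h2 : ∀ j, (if (i, c) = (j, c) then α j else 0) = (if i = j then α j else 0) := by
      intro j
      by_cases hij : i = j
      · simp [hij]
      · rw [if_neg (fun hh => hij (congrArg Prod.fst hh)), if_neg hij]
    rw [if_pos rfl]
    simp only [h2]
    simp [Finset.sum_ite_eq]
  · have h2 : ∀ j, (if (i, c) = (j, b) then α j else 0) = 0 := fun j =>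
      if_neg fun hh => h (congrArg Prod.snd hh)
    rw [if_neg h]
    exact Finset.sum_eq_zero fun j _ => h2 j

lemma perm_canon {n : ℕ} (L : List (Fin n × Bool)) :
    L.Perm (canonList (fun j => Multiset.count ((j, true) : Fin n × Bool) ↑L)
      (fun j => Multiset.count ((j, false) : Fin n × Bool) ↑L)) := by
  rw [← Multiset.coe_eq_coe]
  ext e
  rw [canonList, ← Multiset.coe_add, Multiset.count_add, count_canonHalf, count_canonHalf]
  rcases e with ⟨i, c⟩
  cases c <;> simp

lemma wtOps_canonHalf {n : ℕ} (Λ : Fin n → ℝ) (α : Fin n → ℕ) (b : Bool) :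
    wtOps Λ (canonHalf α b) = ∑ j, (α j : ℝ) * Λ j := by
  unfold canonHalf
  have h1 : ∀ l : List (Fin n),
      wtOps Λ (l.flatMap fun j => List.replicate (α j) (j, b))
        = (l.map fun j => (α j : ℝ) * Λ j).sum := by
    intro l
    induction l with
    | nil => rfl
    | cons j l IH =>
        rw [List.flatMap_cons, wtOps_append, IH, List.map_cons, List.sum_cons]
        congr 1
        unfold wtOps
        rw [List.map_replicate, List.sum_replicate]
        simp [mul_comm]
  rw [h1, ← Fin.sum_univ_def]

/-- the vanishing lemma: any operator word of weight `≤ μ` kills `f` at `0`. -/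
lemma wApply_zero_of_wt_le {n : ℕ} {Λ : Fin n → ℝ} {μ : ℝ} {f : (Fin n → ℂ) → ℂ}
    {U : Set (Fin n → ℂ)} (hU : IsOpen U) (h0 : (0 : Fin n → ℂ) ∈ U)
    (hf : ContDiffOn ℝ (⊤ : ℕ∞) f U) (hmem : memO Λ μ f)
    {L : List (Fin n × Bool)} (hwt : wtOps Λ L ≤ μ) : wApply L f 0 = 0 := by
  set α := fun j => Multiset.count ((j, true) : Fin n × Bool) ↑L with hα
  set β := fun j => Multiset.count ((j, false) : Fin n × Bool) ↑L with hβ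
  have hperm := perm_canon L
  have h1 : wApply L f 0 = wDmulti α (wDbarMulti β f) 0 := by
    rw [canon_eq]
    exact wApply_perm hperm hf hU 0 h0
  rw [h1]
  apply hmem
  have h2 : wtOps Λ (canonList α β) = ∑ j, ((α j + β j : ℕ) : ℝ) * Λ j := by
    rw [canonList, wtOps_append, wtOps_canonHalf, wtOps_canonHalf, ← Finset.sum_add_distrib]
    congr 1; funext j; push_cast; ring
  rw [← h2, ← wtOps_perm Λ hperm]
  exact hwt
lemma sigmaL_nonneg {n : ℕ} (Λ : Fin n → ℝ) (z : Fin n → ℂ) : 0 ≤ sigmaL Λ z :=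
  Finset.sum_nonneg fun j _ => Real.rpow_nonneg (norm_nonneg _) _

lemma sigmaL_zero {n : ℕ} (Λ : Fin n → ℝ) (hΛpos : ∀ j, 0 < Λ j) :
    sigmaL Λ (0 : Fin n → ℂ) = 0 := by
  unfold sigmaL
  refine Finset.sum_eq_zero fun j _ => ?_
  simp only [Pi.zero_apply, norm_zero]
  exact Real.zero_rpow (one_div_ne_zero (ne_of_gt (hΛpos j)))

lemma sigmaL_pos {n : ℕ} (Λ : Fin n → ℝ) {z : Fin n → ℂ} (hz : z ≠ 0) :
    0 < sigmaL Λ z := by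
  obtain ⟨j, hj⟩ : ∃ j, z j ≠ 0 := by
    by_contra h
    push_neg at h
    exact hz (funext h)
  refine Finset.sum_pos' (fun i _ => Real.rpow_nonneg (norm_nonneg _) _) ⟨j, Finset.mem_univ j, ?_⟩
  exact Real.rpow_pos_of_pos (norm_pos_iff.mpr hj) _

lemma sigmaL_mono {n : ℕ} {Λ : Fin n → ℝ} (hΛpos : ∀ j, 0 < Λ j) {x z : Fin n → ℂ}
    (h : ∀ j, ‖x j‖ ≤ ‖z j‖) : sigmaL Λ x ≤ sigmaL Λ z :=
  Finset.sum_le_sum fun j _ =>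
    Real.rpow_le_rpow (norm_nonneg _) (h j) (one_div_nonneg.2 (le_of_lt (hΛpos j)))

lemma abs_le_sigmaL_rpow {n : ℕ} {Λ : Fin n → ℝ} (hΛpos : ∀ j, 0 < Λ j) (z : Fin n → ℂ)
    (j : Fin n) : ‖z j‖ ≤ sigmaL Λ z ^ (Λ j) := by
  have h1 : ‖z j‖ ^ (1 / Λ j) ≤ sigmaL Λ z :=
    Finset.single_le_sum (f := fun i => ‖z i‖ ^ (1 / Λ i))
      (fun i _ => Real.rpow_nonneg (norm_nonneg _) _) (Finset.mem_univ j)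
  have h2 := Real.rpow_le_rpow (Real.rpow_nonneg (norm_nonneg _) _) h1
    (le_of_lt (hΛpos j))
  rwa [← Real.rpow_mul (norm_nonneg _), one_div_mul_cancel (ne_of_gt (hΛpos j)),
    Real.rpow_one] at h2

lemma sigmaL_le {n : ℕ} {Λ : Fin n → ℝ} (hΛpos : ∀ j, 0 < Λ j) (hΛle : ∀ j, Λ j ≤ 1)
    {z : Fin n → ℂ} (hz : ‖z‖ ≤ 1) : sigmaL Λ z ≤ n * ‖z‖ := by
  have hterm : ∀ j, ‖z j‖ ^ (1 / Λ j) ≤ ‖z‖ := by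
    intro j
    have hj : ‖z j‖ ≤ ‖z‖ := by
      exact norm_le_pi_norm z j
    rcases eq_or_lt_of_le (norm_nonneg (z j)) with h0 | h0
    · rw [← h0, Real.zero_rpow (one_div_ne_zero (ne_of_gt (hΛpos j)))]
      exact norm_nonneg z
    · calc ‖z j‖ ^ (1 / Λ j) ≤ ‖z j‖ ^ (1 : ℝ) :=
            Real.rpow_le_rpow_of_exponent_ge h0 (le_trans hj hz)
              ((le_div_iff₀ (hΛpos j)).2 (by linarith [hΛle j]))
        _ = ‖z j‖ := Real.rpow_one _
        _ ≤ ‖z‖ := hj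
  calc sigmaL Λ z ≤ ∑ _j : Fin n, ‖z‖ := Finset.sum_le_sum fun j _ => hterm j
    _ = n * ‖z‖ := by simp [mul_comm]

/-- continuity gives a crude local bound on any iterated derivative. -/
lemma wApply_loc_bound {n : ℕ} (L : List (Fin n × Bool)) {f : (Fin n → ℂ) → ℂ}
    {U : Set (Fin n → ℂ)} (hU : IsOpen U) (h0 : (0 : Fin n → ℂ) ∈ U)
    (hf : ContDiffOn ℝ (⊤ : ℕ∞) f U) :
    ∃ C > (0:ℝ), ∃ r > (0:ℝ), ∀ x : Fin n → ℂ, ‖x‖ < r →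
      ‖wApply L f x‖ ≤ C := by
  have hcont : ContinuousAt (wApply L f) 0 :=
    (wApply_contDiffOn L hf hU).continuousOn.continuousAt (hU.mem_nhds h0)
  rcases Metric.continuousAt_iff.1 hcont 1 one_pos with ⟨r, hr, hball⟩
  refine ⟨‖wApply L f 0‖ + 1, by positivity, r, hr, fun x hx => ?_⟩
  have h1 := hball (show dist x 0 < r by simpa [dist_zero_right] using hx)
  rw [dist_eq_norm] at h1
  have h2 := norm_sub_norm_le (wApply L f x) (wApply L f 0)
  linarith
lemma step_bound {n : ℕ} (hn : 0 < n) {Λ : Fin n → ℝ} (hΛpos : ∀ j, 0 < Λ j)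
    (hΛle : ∀ j, Λ j ≤ 1) {μ : ℝ} {f : (Fin n → ℂ) → ℂ} {U : Set (Fin n → ℂ)}
    (hU : IsOpen U) (h0 : (0 : Fin n → ℂ) ∈ U) (hf : ContDiffOn ℝ (⊤ : ℕ∞) f U)
    (L : List (Fin n × Bool)) (hwt : wtOps Λ L ≤ μ) (hg0 : wApply L f 0 = 0)
    (hop : ∀ o : Fin n × Bool, ∃ C > (0:ℝ), ∃ r > (0:ℝ), ∃ E : ℝ, 0 ≤ E ∧
      μ - wtOps Λ L < Λ o.1 + E ∧
      ∀ x : Fin n → ℂ, ‖x‖ < r → ‖wApply (o :: L) f x‖ ≤ C * sigmaL Λ x ^ E) :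
    ∃ C > (0:ℝ), ∃ δ > (0:ℝ), ∃ r > (0:ℝ), ∀ z : Fin n → ℂ, ‖z‖ < r →
      ‖wApply L f z‖ ≤ C * sigmaL Λ z ^ (μ - wtOps Λ L + δ) := by
  choose C hC r hr E hE0 hElt hbound using hop
  obtain ⟨ρ, hρ, hball⟩ := Metric.isOpen_iff.1 hU 0 h0
  have hne : (Finset.univ : Finset (Fin n × Bool)).Nonempty :=
    ⟨(⟨0, hn⟩, true), Finset.mem_univ _⟩
  set W : ℝ := wtOps Λ L with hW
  set δ : ℝ := Finset.univ.inf' hne (fun o => Λ o.1 + E o - (μ - W)) with hδdef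
  have hδpos : 0 < δ := (Finset.lt_inf'_iff hne).2 fun o _ => by
    have := hElt o; linarith
  have hδle : ∀ o : Fin n × Bool, δ ≤ Λ o.1 + E o - (μ - W) := fun o =>
    Finset.inf'_le _ (Finset.mem_univ o)
  set rmin : ℝ := Finset.univ.inf' hne r with hrmindef
  have hrminpos : 0 < rmin := (Finset.lt_inf'_iff hne).2 fun o _ => hr o
  have hrminle : ∀ o : Fin n × Bool, rmin ≤ r o := fun o =>
    Finset.inf'_le _ (Finset.mem_univ o)
  set Cmax : ℝ := Finset.univ.sup' hne C with hCmaxdef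
  have hCmaxpos : 0 < Cmax :=
    lt_of_lt_of_le (hC ((⟨0, hn⟩ : Fin n), true)) (Finset.le_sup' _ (Finset.mem_univ _))
  have hCle : ∀ o : Fin n × Bool, C o ≤ Cmax := fun o =>
    Finset.le_sup' _ (Finset.mem_univ o)
  set r0 : ℝ := min (min ρ (1 / (n + 1))) rmin with hr0def
  have hr0pos : 0 < r0 := lt_min (lt_min hρ (by positivity)) hrminpos
  have hexp_pos : 0 < μ - W + δ := by linarith
  refine ⟨4 * n * Cmax, by positivity, δ, hδpos, r0, hr0pos, fun z hz => ?_⟩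
  by_cases hz0 : z = 0
  · subst hz0
    rw [hg0, sigmaL_zero Λ hΛpos, Real.zero_rpow (ne_of_gt hexp_pos), norm_zero, mul_zero]
  have hzρ : ‖z‖ < ρ := lt_of_lt_of_le hz (le_trans (min_le_left _ _) (min_le_left _ _))
  have hzrmin : ‖z‖ < rmin := lt_of_lt_of_le hz (min_le_right _ _)
  have hzsmall : ‖z‖ ≤ 1 / (n + 1) :=
    le_of_lt (lt_of_lt_of_le hz (le_trans (min_le_left _ _) (min_le_right _ _)))
  have hz1 : ‖z‖ ≤ 1 := le_trans hzsmall (by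
    rw [div_le_one (by positivity)]; linarith)
  have hσpos : 0 < sigmaL Λ z := sigmaL_pos Λ hz0
  have hσle1 : sigmaL Λ z ≤ 1 := by
    have h1 : sigmaL Λ z ≤ n * ‖z‖ := sigmaL_le hΛpos hΛle hz1
    have h2 : (n : ℝ) * ‖z‖ ≤ n * (1 / (n + 1)) :=
      mul_le_mul_of_nonneg_left hzsmall (Nat.cast_nonneg n)
    have h3 : (n : ℝ) * (1 / (n + 1)) ≤ 1 := by
      rw [mul_one_div, div_le_one (by positivity)]; linarith
    linarith
  set g := wApply L f with hgdef
  set σ : ℝ := sigmaL Λ z with hσdef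
  set T : ℕ → (Fin n → ℂ) := fun m i => if (i : ℕ) < m then z i else 0 with hTdef
  have hTz : T n = z := funext fun i => if_pos i.isLt
  have hT0 : T 0 = 0 := funext fun i => if_neg (Nat.not_lt_zero _)
  have htel : g z = ∑ m ∈ Finset.range n, (g (T (m + 1)) - g (T m)) := by
    rw [Finset.sum_range_sub (fun m => g (T m)), hTz, hT0, hg0, sub_zero]
  have hstep : ∀ m : ℕ, m < n →
      ‖g (T (m + 1)) - g (T m)‖ ≤ 4 * Cmax * σ ^ (μ - W + δ) := by
    intro m hm
    set jm : Fin n := ⟨m, hm⟩ with hjm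
    set v : Fin n → ℂ := Pi.single jm (z jm) with hv
    set γ : ℝ → (Fin n → ℂ) := fun t => T m + t • v with hγdef
    have hγ0 : γ 0 = T m := by simp [hγdef]
    have hγ1 : γ 1 = T (m + 1) := by
      funext i
      simp only [hγdef, Pi.add_apply, Pi.smul_apply, one_smul, hTdef]
      by_cases hij : i = jm
      · subst hij
        simp [hv, Pi.single_apply, hjm]
      · have hne' : (i : ℕ) ≠ m := fun hh => hij (Fin.ext (by simp [hjm, hh]))
        have hiff : ((i : ℕ) < m + 1) = ((i : ℕ) < m) := by
          apply propext; omega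
        simp [hv, Pi.single_apply, hij, hiff]
    have hγcoord : ∀ t ∈ Set.Icc (0:ℝ) 1, ∀ i, ‖γ t i‖ ≤ ‖z i‖ := by
      intro t ht i
      simp only [hγdef, Pi.add_apply, Pi.smul_apply, hTdef, hv, Pi.single_apply]
      by_cases hij : i = jm
      · subst hij
        have hnm : ¬ ((jm : ℕ) < m) := by simp [hjm]
        rw [if_neg hnm, if_pos rfl, zero_add, norm_smul]
        have ht1 : ‖t‖ ≤ 1 := by rw [Real.norm_eq_abs, abs_of_nonneg ht.1]; exact ht.2
        nlinarith [norm_nonneg (z jm)]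
      · rw [if_neg hij, smul_zero, add_zero]
        by_cases him : (i : ℕ) < m
        · rw [if_pos him]
        · rw [if_neg him, norm_zero]; exact norm_nonneg _
    have hγnorm : ∀ t ∈ Set.Icc (0:ℝ) 1, ‖γ t‖ ≤ ‖z‖ := by
      intro t ht
      refine (pi_norm_le_iff_of_nonneg (norm_nonneg z)).2 fun i => ?_
      exact le_trans (hγcoord t ht i) (norm_le_pi_norm z i)
    have hγU : ∀ t ∈ Set.Icc (0:ℝ) 1, γ t ∈ U := fun t ht => hball (by
      rw [Metric.mem_ball, dist_zero_right]
      exact lt_of_le_of_lt (hγnorm t ht) hzρ)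
    have hγrmin : ∀ t ∈ Set.Icc (0:ℝ) 1, ‖γ t‖ < rmin := fun t ht =>
      lt_of_le_of_lt (hγnorm t ht) hzrmin
    have hγσ : ∀ t ∈ Set.Icc (0:ℝ) 1, sigmaL Λ (γ t) ≤ σ := fun t ht =>
      sigmaL_mono hΛpos (fun i => by
        exact hγcoord t ht i)
    have hderiv : ∀ t ∈ Set.Icc (0:ℝ) 1,
        HasDerivAt (fun s => g (γ s)) (fderiv ℝ g (γ t) v) t := by
      intro t ht
      have hγd : HasDerivAt γ v t := by
        have h1 : HasDerivAt (fun s : ℝ => s • v) v t := by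
          simpa using (hasDerivAt_id t).smul_const v
        simpa [hγdef] using h1.const_add (T m)
      have hgd : HasFDerivAt g (fderiv ℝ g (γ t)) (γ t) :=
        (((wApply_contDiffOn L hf hU).contDiffAt
          (hU.mem_nhds (hγU t ht))).differentiableAt (by simp)).hasFDerivAt
      exact hgd.comp_hasDerivAt t hγd
    set S : ℝ := C (jm, true) * σ ^ E (jm, true) + C (jm, false) * σ ^ E (jm, false) with hSdef
    have hσEnonneg : ∀ b : Bool, (0:ℝ) ≤ σ ^ E (jm, b) := fun b =>
      Real.rpow_nonneg (le_of_lt hσpos) _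
    have hSnonneg : 0 ≤ S := by
      have h1 := hC (jm, true); have h2 := hC (jm, false)
      have h3 := hσEnonneg true; have h4 := hσEnonneg false
      nlinarith
    have hdbound : ∀ t ∈ Set.Icc (0:ℝ) 1,
        ‖fderiv ℝ g (γ t) v‖ ≤ ‖z jm‖ * (2 * S) := by
      intro t ht
      set x := γ t with hx
      set A : ℂ := fderiv ℝ g x (Pi.single jm 1) with hA
      set B : ℂ := fderiv ℝ g x (Pi.single jm Complex.I) with hB
      have ha1 : wApply ((jm, true) :: L) f x = (1/2 : ℂ) * (A - Complex.I * B) := rfl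
      have ha2 : wApply ((jm, false) :: L) f x = (1/2 : ℂ) * (A + Complex.I * B) := rfl
      have hAval : A = wApply ((jm, true) :: L) f x + wApply ((jm, false) :: L) f x := by
        rw [ha1, ha2]; ring
      have hBval : B = Complex.I *
          (wApply ((jm, true) :: L) f x - wApply ((jm, false) :: L) f x) := by
        rw [ha1, ha2]
        linear_combination (B : ℂ) * Complex.I_sq
      have hterm : ∀ b : Bool, ‖wApply ((jm, b) :: L) f x‖ ≤ C (jm, b) * σ ^ E (jm, b) := by
        intro b
        refine le_trans (hbound (jm, b) x (lt_of_lt_of_le (hγrmin t ht) (hrminle (jm, b)))) ?_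
        exact mul_le_mul_of_nonneg_left
          (Real.rpow_le_rpow (sigmaL_nonneg Λ x) (hγσ t ht) (hE0 (jm, b)))
          (le_of_lt (hC (jm, b)))
      have hAle : ‖A‖ ≤ S := by
        rw [hAval, hSdef]
        exact le_trans (norm_add_le _ _) (add_le_add (hterm true) (hterm false))
      have hBle : ‖B‖ ≤ S := by
        rw [hBval, norm_mul, Complex.norm_I, one_mul, hSdef]
        exact le_trans (norm_sub_le _ _) (add_le_add (hterm true) (hterm false))
      have hvdecomp : v = (z jm).re • (Pi.single jm (1:ℂ) : Fin n → ℂ) + (z jm).im • (Pi.single jm Complex.I : Fin n → ℂ) := by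
        funext i
        by_cases hij : i = jm
        · subst hij
          simp only [hv, Pi.single_eq_same, Pi.add_apply, Pi.smul_apply, Complex.real_smul,
            mul_one]
          exact (Complex.re_add_im (z jm)).symm
        · simp [hv, Pi.single_eq_of_ne hij]
      have hgdiff : DifferentiableAt ℝ g x :=
        ((wApply_contDiffOn L hf hU).contDiffAt (hU.mem_nhds (hγU t ht))).differentiableAt (by simp)
      have hfv : fderiv ℝ g x v = (z jm).re • A + (z jm).im • B := by
        rw [hvdecomp, map_add, map_smul, map_smul]
      have hre : |(z jm).re| ≤ ‖z jm‖ := by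
        exact Complex.abs_re_le_norm _
      have him : |(z jm).im| ≤ ‖z jm‖ := by
        exact Complex.abs_im_le_norm _
      calc ‖fderiv ℝ g x v‖ = ‖(z jm).re • A + (z jm).im • B‖ := by rw [hfv]
        _ ≤ ‖(z jm).re • A‖ + ‖(z jm).im • B‖ := norm_add_le _ _
        _ = |(z jm).re| * ‖A‖ + |(z jm).im| * ‖B‖ := by
            rw [norm_smul, norm_smul, Real.norm_eq_abs, Real.norm_eq_abs]
        _ ≤ ‖z jm‖ * S + ‖z jm‖ * S := by
            have hnA := norm_nonneg A; have hnB := norm_nonneg B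
            have h1 := abs_nonneg (z jm).re; have h2 := abs_nonneg (z jm).im
            have := mul_le_mul hre hAle hnA (norm_nonneg (z jm))
            have := mul_le_mul him hBle hnB (norm_nonneg (z jm))
            linarith
        _ = ‖z jm‖ * (2 * S) := by ring
    have hmv := norm_image_sub_le_of_norm_deriv_le_segment'
      (f := fun s => g (γ s)) (f' := fun s => fderiv ℝ g (γ s) v)
      (fun t ht => (hderiv t ht).hasDerivWithinAt)
      (fun t ht => hdbound t (Set.mem_Icc_of_Ico ht))
      1 (Set.right_mem_Icc.2 zero_le_one)
    have hmv' : ‖g (T (m + 1)) - g (T m)‖ ≤ ‖z jm‖ * (2 * S) := by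
      have := hmv
      simp only [hγ1, hγ0] at this
      simpa using this
    have hzjm : ‖z jm‖ ≤ σ ^ Λ jm := by
      exact abs_le_sigmaL_rpow hΛpos z jm
    have hmono : ∀ b : Bool, σ ^ Λ jm * σ ^ E (jm, b) ≤ σ ^ (μ - W + δ) := by
      intro b
      rw [← Real.rpow_add hσpos]
      refine Real.rpow_le_rpow_of_exponent_ge hσpos hσle1 ?_
      have := hδle (jm, b)
      simp only at this
      linarith
    have hσΛnonneg : (0:ℝ) ≤ σ ^ Λ jm := Real.rpow_nonneg (le_of_lt hσpos) _
    have hfinal : ‖z jm‖ * (2 * S) ≤ 4 * Cmax * σ ^ (μ - W + δ) := by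
      have h1 : ‖z jm‖ * (2 * S) ≤ σ ^ Λ jm * (2 * S) :=
        mul_le_mul_of_nonneg_right hzjm (by linarith)
      have h2 : σ ^ Λ jm * (2 * S) =
          2 * (C (jm, true) * (σ ^ Λ jm * σ ^ E (jm, true)))
          + 2 * (C (jm, false) * (σ ^ Λ jm * σ ^ E (jm, false))) := by
        rw [hSdef]; ring
      have hb : ∀ b : Bool, C (jm, b) * (σ ^ Λ jm * σ ^ E (jm, b))
          ≤ Cmax * σ ^ (μ - W + δ) := by
        intro b
        refine mul_le_mul (hCle (jm, b)) (hmono b) ?_ (le_of_lt hCmaxpos)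
        positivity
      have hbt := hb true; have hbf := hb false
      linarith
    linarith
  rw [htel]
  calc ‖∑ m ∈ Finset.range n, (g (T (m + 1)) - g (T m))‖
      ≤ ∑ m ∈ Finset.range n, ‖g (T (m + 1)) - g (T m)‖ := norm_sum_le _ _
    _ ≤ ∑ _m ∈ Finset.range n, 4 * Cmax * σ ^ (μ - W + δ) :=
        Finset.sum_le_sum fun m hm => hstep m (Finset.mem_range.1 hm)
    _ = 4 * n * Cmax * σ ^ (μ - W + δ) := by
        rw [Finset.sum_const, Finset.card_range, nsmul_eq_mul]; ring
lemma main_bound {n : ℕ} (hn : 0 < n) {Λ : Fin n → ℝ} (hΛpos : ∀ j, 0 < Λ j)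
    (hΛle : ∀ j, Λ j ≤ 1) {μ : ℝ} {f : (Fin n → ℂ) → ℂ} {U : Set (Fin n → ℂ)}
    (hU : IsOpen U) (h0 : (0 : Fin n → ℂ) ∈ U) (hf : ContDiffOn ℝ (⊤ : ℕ∞) f U)
    (hmem : memO Λ μ f) (lmin : ℝ) (hlminpos : 0 < lmin) (hlmin : ∀ j, lmin ≤ Λ j) :
    ∀ (k : ℕ) (L : List (Fin n × Bool)), wtOps Λ L ≤ μ → μ - wtOps Λ L ≤ k * lmin →
      ∃ C > (0:ℝ), ∃ δ > (0:ℝ), ∃ r > (0:ℝ), ∀ z : Fin n → ℂ, ‖z‖ < r →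
        ‖wApply L f z‖ ≤ C * sigmaL Λ z ^ (μ - wtOps Λ L + δ) := by
  intro k
  induction k with
  | zero =>
      intro L hwt hk
      rw [Nat.cast_zero, zero_mul] at hk
      apply step_bound hn hΛpos hΛle hU h0 hf L hwt
        (wApply_zero_of_wt_le hU h0 hf hmem hwt)
      intro o
      obtain ⟨Cb, hCb, rb, hrb, hb⟩ := wApply_loc_bound (o :: L) hU h0 hf
      refine ⟨Cb, hCb, rb, hrb, 0, le_refl 0, ?_, ?_⟩
      · have := hΛpos o.1; linarith
      · intro x hx; rw [Real.rpow_zero, mul_one]; exact hb x hx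
  | succ k IH =>
      intro L hwt hk
      push_cast at hk
      apply step_bound hn hΛpos hΛle hU h0 hf L hwt
        (wApply_zero_of_wt_le hU h0 hf hmem hwt)
      intro o
      by_cases hcase : wtOps Λ (o :: L) ≤ μ
      · have hwtcons : wtOps Λ (o :: L) = Λ o.1 + wtOps Λ L := wtOps_cons Λ o L
        have hk' : μ - wtOps Λ (o :: L) ≤ k * lmin := by
          rw [hwtcons]
          have := hlmin o.1
          linarith
        obtain ⟨C, hC, δ, hδ, r, hr, hb⟩ := IH (o :: L) hcase hk'
        refine ⟨C, hC, r, hr, μ - wtOps Λ (o :: L) + δ, ?_, ?_, hb⟩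
        · linarith [hcase, hδ]
        · rw [hwtcons]; linarith
      · push_neg at hcase
        rw [wtOps_cons] at hcase
        obtain ⟨Cb, hCb, rb, hrb, hb⟩ := wApply_loc_bound (o :: L) hU h0 hf
        refine ⟨Cb, hCb, rb, hrb, 0, le_refl 0, by linarith, ?_⟩
        intro x hx; rw [Real.rpow_zero, mul_one]; exact hb x hx

/-- If `f ∈ O(μ,Λ)` is smooth near `0` and `wt(p)+wt(q) < μ`, then
`|D^p D̄^q f(z)| ≤ C σ_Λ(z)^(μ - wt(p) - wt(q) + δ)` near `0` for some `C, δ > 0`. -/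
theorem stmt_4 {n : ℕ} (Λ : Fin n → ℝ) (hΛpos : ∀ j, 0 < Λ j) (hΛle : ∀ j, Λ j ≤ 1)
    (μ : ℝ) (hμ : 0 < μ) (f : (Fin n → ℂ) → ℂ)
    (hsmooth : ∃ U : Set (Fin n → ℂ), IsOpen U ∧ (0 : Fin n → ℂ) ∈ U ∧ ContDiffOn ℝ (⊤ : ℕ∞) f U)
    (hf : memO Λ μ f) (p q : Fin n → ℕ) (hpq : wtL Λ p + wtL Λ q < μ) :
    ∃ C > (0 : ℝ), ∃ δ > (0 : ℝ), ∃ V ∈ nhds (0 : Fin n → ℂ),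
      ∀ z ∈ V, ‖wDmulti p (wDbarMulti q f) z‖ ≤
        C * (sigmaL Λ z) ^ (μ - wtL Λ p - wtL Λ q + δ) := by
  obtain ⟨U, hU, h0, hfs⟩ := hsmooth
  rcases Nat.eq_zero_or_pos n with hn0 | hn
  · -- degenerate case n = 0
    subst hn0
    refine ⟨1, one_pos, 1, one_pos, Set.univ, Filter.univ_mem, fun z _ => ?_⟩
    have hz0 : z = 0 := funext fun i => i.elim0
    subst hz0
    have hzero : wDmulti p (wDbarMulti q f) 0 = 0 := by
      apply hf
      simp
      linarith
    rw [hzero, norm_zero]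
    have hσ : sigmaL Λ (0 : Fin 0 → ℂ) = 0 := by simp [sigmaL]
    have hwtp : wtL Λ p = 0 := by simp [wtL]
    have hwtq : wtL Λ q = 0 := by simp [wtL]
    rw [hσ, hwtp, hwtq, Real.zero_rpow (by linarith : μ - 0 - 0 + 1 ≠ 0), mul_zero]
  · have hne : (Finset.univ : Finset (Fin n)).Nonempty := ⟨⟨0, hn⟩, Finset.mem_univ _⟩
    set lmin : ℝ := Finset.univ.inf' hne Λ with hlmin
    have hlminpos : 0 < lmin := (Finset.lt_inf'_iff hne).2 fun j _ => hΛpos j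
    have hlminle : ∀ j, lmin ≤ Λ j := fun j => Finset.inf'_le _ (Finset.mem_univ j)
    set L : List (Fin n × Bool) := canonList p q with hL
    have hwtL : wtOps Λ L = wtL Λ p + wtL Λ q := by
      rw [hL, canonList, wtOps_append, wtOps_canonHalf, wtOps_canonHalf]
      rfl
    have hwtle : wtOps Λ L ≤ μ := by rw [hwtL]; linarith
    set k : ℕ := ⌈(μ - wtOps Λ L) / lmin⌉₊ with hk
    have hkle : μ - wtOps Λ L ≤ k * lmin := by
      have h1 : (μ - wtOps Λ L) / lmin ≤ k := Nat.le_ceil _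
      calc μ - wtOps Λ L = (μ - wtOps Λ L) / lmin * lmin := by
            field_simp
        _ ≤ k * lmin := mul_le_mul_of_nonneg_right h1 (le_of_lt hlminpos)
    obtain ⟨C, hC, δ, hδ, r, hr, hb⟩ :=
      main_bound hn hΛpos hΛle hU h0 hfs hf lmin hlminpos hlminle k L hwtle hkle
    refine ⟨C, hC, δ, hδ, Metric.ball 0 r, Metric.ball_mem_nhds 0 hr, fun z hz => ?_⟩
    have hzr : ‖z‖ < r := by rwa [Metric.mem_ball, dist_zero_right] at hz
    have := hb z hzr
    rw [canon_eq p q f]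
    rw [hwtL] at this
    calc ‖wApply L f z‖ ≤ C * sigmaL Λ z ^ (μ - (wtL Λ p + wtL Λ q) + δ) := this
      _ = C * sigmaL Λ z ^ (μ - wtL Λ p - wtL Λ q + δ) := by ring_nf
end

section
/- Let Λ=(λ₁,…,λₙ) be a multiweight and let P : ℂⁿ → ℝ be a C^∞-smooth function which is Λ-homogeneous, i.e., P(π_t(z)) = t P(z) for all t ≥ 0 and z ∈ ℂⁿ. Let {ε_j} be a sequence of positive reals with ε_j → 0, and let {α_j} ⊂ ℂⁿ be such that π_{1/ε_j}(α_j) converges to some α ∈ ℂⁿ. Then for all multi-indices p, q ∈ ℕⁿ with wt(p) + wt(q) ≤ 1, one has lim_{j→∞} ε_j^{wt(p)+wt(q)−1} (D^p D̄^q P)(α_j) = (D^p D̄^q P)(α). -/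
/-- The anisotropic dilation `π_t(z) = (t^{λ₁} z₁, …, t^{λₙ} zₙ)`. -/
noncomputable def piL {n : ℕ} (Λ : Fin n → ℝ) (t : ℝ) (z : Fin n → ℂ) : Fin n → ℂ :=
  fun j => ((t ^ Λ j : ℝ) : ℂ) * z j

noncomputable def piCLM {n : ℕ} (Λ : Fin n → ℝ) (t : ℝ) : (Fin n → ℂ) →L[ℝ] (Fin n → ℂ) :=
  (ContinuousLinearMap.pi fun k => ((t ^ Λ k : ℝ) : ℂ) •
    (ContinuousLinearMap.proj k : (Fin n → ℂ) →L[ℂ] ℂ)).restrictScalars ℝ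

lemma piCLM_apply {n : ℕ} (Λ : Fin n → ℝ) (t : ℝ) (z : Fin n → ℂ) :
    piCLM Λ t z = piL Λ t z := rfl

lemma piCLM_single {n : ℕ} (Λ : Fin n → ℝ) (t : ℝ) (j : Fin n) (c : ℂ) :
    piCLM Λ t (Pi.single j c : Fin n → ℂ) = (t ^ Λ j : ℝ) • (Pi.single j c : Fin n → ℂ) := by
  funext k
  simp only [piCLM_apply, piL, Pi.smul_apply]
  by_cases h : k = j
  · subst h; simp [Complex.real_smul]
  · simp [Pi.single_eq_of_ne h]

lemma fderiv_comp_piCLM {n : ℕ} {f : (Fin n → ℂ) → ℂ} (hf : ContDiff ℝ (⊤ : ℕ∞) f)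
    (Λ : Fin n → ℝ) (t : ℝ) (z : Fin n → ℂ) :
    fderiv ℝ (fun w => f (piL Λ t w)) z = (fderiv ℝ f (piL Λ t z)).comp (piCLM Λ t) := by
  have h1 : HasFDerivAt f (fderiv ℝ f (piL Λ t z)) (piCLM Λ t z) :=
    ((hf.differentiable (by simp)).differentiableAt).hasFDerivAt
  exact (h1.comp z (piCLM Λ t).hasFDerivAt).fderiv

section wDgen
/- We treat wD and wDbar uniformly: both are of the form
   z ↦ (1/2) * (Df z e₁ + c * Df z e_I) with c = ∓ I. -/

variable {n : ℕ}

lemma wD_smooth (j : Fin n) {f : (Fin n → ℂ) → ℂ} (hf : ContDiff ℝ (⊤ : ℕ∞) f) :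
    ContDiff ℝ (⊤ : ℕ∞) (wD j f) := by
  have h1 : ContDiff ℝ (⊤ : ℕ∞) (fderiv ℝ f) := hf.fderiv_right (by simp)
  exact contDiff_const.mul ((h1.clm_apply contDiff_const).sub
    (contDiff_const.mul (h1.clm_apply contDiff_const)))

lemma wDbar_smooth (j : Fin n) {f : (Fin n → ℂ) → ℂ} (hf : ContDiff ℝ (⊤ : ℕ∞) f) :
    ContDiff ℝ (⊤ : ℕ∞) (wDbar j f) := by
  have h1 : ContDiff ℝ (⊤ : ℕ∞) (fderiv ℝ f) := hf.fderiv_right (by simp)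
  exact contDiff_const.mul ((h1.clm_apply contDiff_const).add
    (contDiff_const.mul (h1.clm_apply contDiff_const)))

lemma wD_const_mul (j : Fin n) {f : (Fin n → ℂ) → ℂ} (hf : ContDiff ℝ (⊤ : ℕ∞) f) (c : ℂ) :
    wD j (fun z => c * f z) = fun z => c * wD j f z := by
  funext z
  have hd : DifferentiableAt ℝ f z := (hf.differentiable (by simp)).differentiableAt
  have : fderiv ℝ (fun z => c * f z) z = c • fderiv ℝ f z := fderiv_const_smul hd c
  simp only [wD, this, ContinuousLinearMap.smul_apply, smul_eq_mul]
  ring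

lemma wDbar_const_mul (j : Fin n) {f : (Fin n → ℂ) → ℂ} (hf : ContDiff ℝ (⊤ : ℕ∞) f) (c : ℂ) :
    wDbar j (fun z => c * f z) = fun z => c * wDbar j f z := by
  funext z
  have hd : DifferentiableAt ℝ f z := (hf.differentiable (by simp)).differentiableAt
  have : fderiv ℝ (fun z => c * f z) z = c • fderiv ℝ f z := fderiv_const_smul hd c
  simp only [wDbar, this, ContinuousLinearMap.smul_apply, smul_eq_mul]
  ring

lemma wD_comp_piL (j : Fin n) {f : (Fin n → ℂ) → ℂ} (hf : ContDiff ℝ (⊤ : ℕ∞) f)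
    (Λ : Fin n → ℝ) (t : ℝ) :
    wD j (fun w => f (piL Λ t w)) =
      fun z => ((t ^ Λ j : ℝ) : ℂ) * wD j f (piL Λ t z) := by
  funext z
  simp only [wD, fderiv_comp_piCLM hf Λ t z, ContinuousLinearMap.comp_apply,
    piCLM_single, map_smul]
  simp [Complex.real_smul]
  ring

lemma wDbar_comp_piL (j : Fin n) {f : (Fin n → ℂ) → ℂ} (hf : ContDiff ℝ (⊤ : ℕ∞) f)
    (Λ : Fin n → ℝ) (t : ℝ) :
    wDbar j (fun w => f (piL Λ t w)) =
      fun z => ((t ^ Λ j : ℝ) : ℂ) * wDbar j f (piL Λ t z) := by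
  funext z
  simp only [wDbar, fderiv_comp_piCLM hf Λ t z, ContinuousLinearMap.comp_apply,
    piCLM_single, map_smul]
  simp [Complex.real_smul]
  ring

/-- Iterates of wD preserve smoothness. -/
lemma wD_iter_smooth (j : Fin n) (k : ℕ) {f : (Fin n → ℂ) → ℂ} (hf : ContDiff ℝ (⊤ : ℕ∞) f) :
    ContDiff ℝ (⊤ : ℕ∞) ((wD j)^[k] f) := by
  induction k generalizing f with
  | zero => exact hf
  | succ k ih => rw [Function.iterate_succ_apply]; exact ih (wD_smooth j hf)

lemma wDbar_iter_smooth (j : Fin n) (k : ℕ) {f : (Fin n → ℂ) → ℂ} (hf : ContDiff ℝ (⊤ : ℕ∞) f) :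
    ContDiff ℝ (⊤ : ℕ∞) ((wDbar j)^[k] f) := by
  induction k generalizing f with
  | zero => exact hf
  | succ k ih => rw [Function.iterate_succ_apply]; exact ih (wDbar_smooth j hf)

lemma wD_iter_const_mul (j : Fin n) (k : ℕ) {f : (Fin n → ℂ) → ℂ} (hf : ContDiff ℝ (⊤ : ℕ∞) f)
    (c : ℂ) : (wD j)^[k] (fun z => c * f z) = fun z => c * (wD j)^[k] f z := by
  induction k generalizing f with
  | zero => rfl
  | succ k ih =>
    rw [Function.iterate_succ_apply, Function.iterate_succ_apply,
      wD_const_mul j hf c, ih (wD_smooth j hf)]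

lemma wDbar_iter_const_mul (j : Fin n) (k : ℕ) {f : (Fin n → ℂ) → ℂ} (hf : ContDiff ℝ (⊤ : ℕ∞) f)
    (c : ℂ) : (wDbar j)^[k] (fun z => c * f z) = fun z => c * (wDbar j)^[k] f z := by
  induction k generalizing f with
  | zero => rfl
  | succ k ih =>
    rw [Function.iterate_succ_apply, Function.iterate_succ_apply,
      wDbar_const_mul j hf c, ih (wDbar_smooth j hf)]

lemma wD_iter_comp_piL (j : Fin n) (k : ℕ) {f : (Fin n → ℂ) → ℂ} (hf : ContDiff ℝ (⊤ : ℕ∞) f)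
    (Λ : Fin n → ℝ) (t : ℝ) :
    (wD j)^[k] (fun w => f (piL Λ t w)) =
      fun z => ((t ^ Λ j : ℝ) : ℂ) ^ k * (wD j)^[k] f (piL Λ t z) := by
  induction k generalizing f with
  | zero => simp
  | succ k ih =>
    rw [Function.iterate_succ_apply, wD_comp_piL j hf Λ t]
    have h2 : ContDiff ℝ (⊤ : ℕ∞) (wD j f) := wD_smooth j hf
    have : (wD j)^[k] (fun z => ((t ^ Λ j : ℝ) : ℂ) * (fun w => wD j f (piL Λ t w)) z)
        = fun z => ((t ^ Λ j : ℝ) : ℂ) * (wD j)^[k] (fun w => wD j f (piL Λ t w)) z := by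
      refine wD_iter_const_mul j k ?_ _
      exact h2.comp ((piCLM Λ t).contDiff)
    rw [show (fun w => ((t ^ Λ j : ℝ) : ℂ) * wD j f (piL Λ t w))
        = fun z => ((t ^ Λ j : ℝ) : ℂ) * (fun w => wD j f (piL Λ t w)) z from rfl, this,
      ih h2]
    funext z
    rw [Function.iterate_succ_apply]
    ring

lemma wDbar_iter_comp_piL (j : Fin n) (k : ℕ) {f : (Fin n → ℂ) → ℂ} (hf : ContDiff ℝ (⊤ : ℕ∞) f)
    (Λ : Fin n → ℝ) (t : ℝ) :
    (wDbar j)^[k] (fun w => f (piL Λ t w)) =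
      fun z => ((t ^ Λ j : ℝ) : ℂ) ^ k * (wDbar j)^[k] f (piL Λ t z) := by
  induction k generalizing f with
  | zero => simp
  | succ k ih =>
    rw [Function.iterate_succ_apply, wDbar_comp_piL j hf Λ t]
    have h2 : ContDiff ℝ (⊤ : ℕ∞) (wDbar j f) := wDbar_smooth j hf
    have : (wDbar j)^[k] (fun z => ((t ^ Λ j : ℝ) : ℂ) * (fun w => wDbar j f (piL Λ t w)) z)
        = fun z => ((t ^ Λ j : ℝ) : ℂ) * (wDbar j)^[k] (fun w => wDbar j f (piL Λ t w)) z := by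
      refine wDbar_iter_const_mul j k ?_ _
      exact h2.comp ((piCLM Λ t).contDiff)
    rw [show (fun w => ((t ^ Λ j : ℝ) : ℂ) * wDbar j f (piL Λ t w))
        = fun z => ((t ^ Λ j : ℝ) : ℂ) * (fun w => wDbar j f (piL Λ t w)) z from rfl, this,
      ih h2]
    funext z
    rw [Function.iterate_succ_apply]
    ring

end wDgen


section folds
variable {n : ℕ} (Λ : Fin n → ℝ) (p : Fin n → ℕ)

lemma fold_wD_smooth (l : List (Fin n)) {f : (Fin n → ℂ) → ℂ} (hf : ContDiff ℝ (⊤ : ℕ∞) f) :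
    ContDiff ℝ (⊤ : ℕ∞) (l.foldr (fun j g => (wD j)^[p j] g) f) := by
  induction l with
  | nil => exact hf
  | cons j l ih => exact wD_iter_smooth j (p j) ih

lemma fold_wDbar_smooth (l : List (Fin n)) {f : (Fin n → ℂ) → ℂ} (hf : ContDiff ℝ (⊤ : ℕ∞) f) :
    ContDiff ℝ (⊤ : ℕ∞) (l.foldr (fun j g => (wDbar j)^[p j] g) f) := by
  induction l with
  | nil => exact hf
  | cons j l ih => exact wDbar_iter_smooth j (p j) ih

lemma fold_wD_const_mul (l : List (Fin n)) {f : (Fin n → ℂ) → ℂ} (hf : ContDiff ℝ (⊤ : ℕ∞) f)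
    (c : ℂ) : l.foldr (fun j g => (wD j)^[p j] g) (fun z => c * f z)
      = fun z => c * l.foldr (fun j g => (wD j)^[p j] g) f z := by
  induction l with
  | nil => rfl
  | cons j l ih =>
    simp only [List.foldr_cons, ih]
    exact wD_iter_const_mul j (p j) (fold_wD_smooth p l hf) c

lemma fold_wDbar_const_mul (l : List (Fin n)) {f : (Fin n → ℂ) → ℂ} (hf : ContDiff ℝ (⊤ : ℕ∞) f)
    (c : ℂ) : l.foldr (fun j g => (wDbar j)^[p j] g) (fun z => c * f z)
      = fun z => c * l.foldr (fun j g => (wDbar j)^[p j] g) f z := by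
  induction l with
  | nil => rfl
  | cons j l ih =>
    simp only [List.foldr_cons, ih]
    exact wDbar_iter_const_mul j (p j) (fold_wDbar_smooth p l hf) c

lemma fold_wD_comp_piL (t : ℝ) (l : List (Fin n)) {f : (Fin n → ℂ) → ℂ}
    (hf : ContDiff ℝ (⊤ : ℕ∞) f) :
    l.foldr (fun j g => (wD j)^[p j] g) (fun w => f (piL Λ t w))
      = fun z => (l.map fun j => ((t ^ Λ j : ℝ) : ℂ) ^ (p j)).prod *
          l.foldr (fun j g => (wD j)^[p j] g) f (piL Λ t z) := by
  induction l with
  | nil => simp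
  | cons j l ih =>
    have hfl : ContDiff ℝ (⊤ : ℕ∞) (l.foldr (fun j g => (wD j)^[p j] g) f) :=
      fold_wD_smooth p l hf
    simp only [List.foldr_cons, ih, List.map_cons, List.prod_cons]
    have h1 : ((wD j)^[p j] fun z => (l.map fun j => ((t ^ Λ j : ℝ) : ℂ) ^ (p j)).prod *
          l.foldr (fun j g => (wD j)^[p j] g) f (piL Λ t z))
        = fun z => (l.map fun j => ((t ^ Λ j : ℝ) : ℂ) ^ (p j)).prod *
          (wD j)^[p j] (fun w => l.foldr (fun j g => (wD j)^[p j] g) f (piL Λ t w)) z :=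
      wD_iter_const_mul j (p j) (hfl.comp (piCLM Λ t).contDiff) _
    rw [h1, wD_iter_comp_piL j (p j) hfl Λ t]
    funext z; ring

lemma fold_wDbar_comp_piL (t : ℝ) (l : List (Fin n)) {f : (Fin n → ℂ) → ℂ}
    (hf : ContDiff ℝ (⊤ : ℕ∞) f) :
    l.foldr (fun j g => (wDbar j)^[p j] g) (fun w => f (piL Λ t w))
      = fun z => (l.map fun j => ((t ^ Λ j : ℝ) : ℂ) ^ (p j)).prod *
          l.foldr (fun j g => (wDbar j)^[p j] g) f (piL Λ t z) := by
  induction l with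
  | nil => simp
  | cons j l ih =>
    have hfl : ContDiff ℝ (⊤ : ℕ∞) (l.foldr (fun j g => (wDbar j)^[p j] g) f) :=
      fold_wDbar_smooth p l hf
    simp only [List.foldr_cons, ih, List.map_cons, List.prod_cons]
    have h1 : ((wDbar j)^[p j] fun z => (l.map fun j => ((t ^ Λ j : ℝ) : ℂ) ^ (p j)).prod *
          l.foldr (fun j g => (wDbar j)^[p j] g) f (piL Λ t z))
        = fun z => (l.map fun j => ((t ^ Λ j : ℝ) : ℂ) ^ (p j)).prod *
          (wDbar j)^[p j] (fun w => l.foldr (fun j g => (wDbar j)^[p j] g) f (piL Λ t w)) z :=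
      wDbar_iter_const_mul j (p j) (hfl.comp (piCLM Λ t).contDiff) _
    rw [h1, wDbar_iter_comp_piL j (p j) hfl Λ t]
    funext z; ring

lemma prod_pow_eq_rpow (t : ℝ) (ht : 0 < t) :
    ((List.finRange n).map fun j => ((t ^ Λ j : ℝ) : ℂ) ^ (p j)).prod
      = ((t ^ (∑ j, (p j : ℝ) * Λ j) : ℝ) : ℂ) := by
  rw [← Fin.prod_univ_def, Real.rpow_sum_of_pos ht, Complex.ofReal_prod]
  refine Finset.prod_congr rfl fun j _ => ?_
  rw [mul_comm, ← Complex.ofReal_pow, Real.rpow_mul ht.le, Real.rpow_natCast]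

end folds


open Filter in
theorem stmt_9' {n : ℕ} (Λ : Fin n → ℝ) (hΛpos : ∀ j, 0 < Λ j) (hΛle : ∀ j, Λ j ≤ 1)
    (P : (Fin n → ℂ) → ℝ) (hPsmooth : ContDiff ℝ (⊤ : ℕ∞) P)
    (hPhom : ∀ t : ℝ, 0 ≤ t → ∀ z : Fin n → ℂ, P (piL Λ t z) = t * P z)
    (ε : ℕ → ℝ) (hεpos : ∀ j, 0 < ε j) (hεlim : Tendsto ε atTop (nhds 0))
    (α : ℕ → (Fin n → ℂ)) (a : Fin n → ℂ)
    (hα : Tendsto (fun j => piL Λ (1 / ε j) (α j)) atTop (nhds a))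
    (p q : Fin n → ℕ) (hpq : wtL Λ p + wtL Λ q ≤ 1) :
    Tendsto (fun j => ((ε j ^ (wtL Λ p + wtL Λ q - 1) : ℝ) : ℂ) *
        (List.finRange n).foldr (fun j g => (wD j)^[p j] g)
          ((List.finRange n).foldr (fun j g => (wDbar j)^[q j] g) (fun w => (P w : ℂ))) (α j))
      atTop
      (nhds ((List.finRange n).foldr (fun j g => (wD j)^[p j] g)
          ((List.finRange n).foldr (fun j g => (wDbar j)^[q j] g) (fun w => (P w : ℂ))) a)) := by
  set Pc : (Fin n → ℂ) → ℂ := fun w => (P w : ℂ) with hPc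
  have hPC : ContDiff ℝ (⊤ : ℕ∞) Pc := Complex.ofRealCLM.contDiff.comp hPsmooth
  set Qb : (Fin n → ℂ) → ℂ := (List.finRange n).foldr (fun j g => (wDbar j)^[q j] g) Pc with hQb
  have hQ : ContDiff ℝ (⊤ : ℕ∞) Qb := fold_wDbar_smooth q _ hPC
  set G : (Fin n → ℂ) → ℂ := (List.finRange n).foldr (fun j g => (wD j)^[p j] g) Qb with hG
  have hGsm : ContDiff ℝ (⊤ : ℕ∞) G := fold_wD_smooth p _ hQ
  set w : ℝ := wtL Λ p + wtL Λ q with hw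
  -- scaling identity
  have key : ∀ t : ℝ, 0 < t → ∀ z, (t : ℂ) * G z = ((t ^ w : ℝ) : ℂ) * G (piL Λ t z) := by
    intro t ht z
    have hPcomp : (fun x => Pc (piL Λ t x)) = fun x => (t : ℂ) * Pc x := by
      funext x
      simp only [hPc, hPhom t ht.le x]
      push_cast
      ring
    have hB : (List.finRange n).foldr (fun j g => (wDbar j)^[q j] g) (fun x => Pc (piL Λ t x))
        = fun x => ((t ^ wtL Λ q : ℝ) : ℂ) * Qb (piL Λ t x) := by
      rw [fold_wDbar_comp_piL Λ q t _ hPC, prod_pow_eq_rpow Λ q t ht]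
      rfl
    have hA : (List.finRange n).foldr (fun j g => (wDbar j)^[q j] g) (fun x => Pc (piL Λ t x))
        = fun x => (t : ℂ) * Qb x := by
      rw [hPcomp, fold_wDbar_const_mul q _ hPC]
    -- apply wDmulti p
    have h1 : (List.finRange n).foldr (fun j g => (wD j)^[p j] g)
          (fun x => ((t ^ wtL Λ q : ℝ) : ℂ) * Qb (piL Λ t x))
        = fun x => ((t ^ wtL Λ q : ℝ) : ℂ) * ((t ^ wtL Λ p : ℝ) : ℂ) * G (piL Λ t x) := by
      have hc : ContDiff ℝ (⊤ : ℕ∞) (fun x => Qb (piL Λ t x)) := hQ.comp (piCLM Λ t).contDiff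
      rw [fold_wD_const_mul p _ hc,
        fold_wD_comp_piL Λ p t _ hQ, prod_pow_eq_rpow Λ p t ht]
      funext x; simp only [wtL]; ring
    have h2 : (List.finRange n).foldr (fun j g => (wD j)^[p j] g) (fun x => (t : ℂ) * Qb x)
        = fun x => (t : ℂ) * G x := fold_wD_const_mul p _ hQ _
    have hAB : (fun x => (t : ℂ) * Qb x)
        = fun x => ((t ^ wtL Λ q : ℝ) : ℂ) * Qb (piL Λ t x) := hA.symm.trans hB
    have h3 : (fun x => (t : ℂ) * G x)
        = fun x => ((t ^ wtL Λ q : ℝ) : ℂ) * ((t ^ wtL Λ p : ℝ) : ℂ) * G (piL Λ t x) := by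
      rw [← h2, ← h1]
      exact congrArg (fun f => (List.finRange n).foldr (fun j g => (wD j)^[p j] g) f) hAB
    rw [congrFun h3 z]
    have : (t ^ w : ℝ) = t ^ wtL Λ q * t ^ wtL Λ p := by
      rw [hw, add_comm (wtL Λ p), Real.rpow_add ht]
    rw [this]
    push_cast
    ring
  -- π_{ε j} (π_{1/ε j} α_j) = α_j
  have hinv : ∀ j, piL Λ (ε j) (piL Λ (1 / ε j) (α j)) = α j := by
    intro j
    funext k
    simp only [piL]
    have h1 : ((1 / ε j) ^ Λ k : ℝ) = ((ε j) ^ Λ k)⁻¹ := by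
      rw [one_div, Real.inv_rpow (hεpos j).le]
    rw [h1, ← mul_assoc]
    have h2 : ((ε j) ^ Λ k : ℝ) ≠ 0 := (Real.rpow_pos_of_pos (hεpos j) _).ne'
    rw [← Complex.ofReal_mul, mul_inv_cancel₀ h2]
    simp
  -- pointwise identity
  have hpt : ∀ j, ((ε j ^ (w - 1) : ℝ) : ℂ) * G (α j) = G (piL Λ (1 / ε j) (α j)) := by
    intro j
    have hk := key (ε j) (hεpos j) (piL Λ (1 / ε j) (α j))
    rw [hinv j] at hk
    have hεne : (ε j : ℝ) ≠ 0 := (hεpos j).ne'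
    have hεnec : (ε j : ℂ) ≠ 0 := by exact_mod_cast hεne
    have e1 : (ε j ^ (w - 1) : ℝ) = ε j ^ w / ε j := by
      rw [Real.rpow_sub (hεpos j), Real.rpow_one]
    rw [e1]
    push_cast
    field_simp
    linear_combination -hk
  have funeq : (fun j => ((ε j ^ (w - 1) : ℝ) : ℂ) * G (α j))
      = fun j => G (piL Λ (1 / ε j) (α j)) := funext hpt
  rw [funeq]
  exact (hGsm.continuous.tendsto a).comp hα

open Filter

/-- If `P : ℂⁿ → ℝ` is smooth and `Λ`-homogeneous, `ε_j → 0⁺`,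
`π_{1/ε_j}(α_j) → α`, and `wt(p)+wt(q) ≤ 1`, then
`ε_j^(wt(p)+wt(q)-1) (D^p D̄^q P)(α_j) → (D^p D̄^q P)(α)`. -/
theorem stmt_9 {n : ℕ} (Λ : Fin n → ℝ) (hΛpos : ∀ j, 0 < Λ j) (hΛle : ∀ j, Λ j ≤ 1)
    (P : (Fin n → ℂ) → ℝ) (hPsmooth : ContDiff ℝ (⊤ : ℕ∞) P)
    (hPhom : ∀ t : ℝ, 0 ≤ t → ∀ z : Fin n → ℂ, P (piL Λ t z) = t * P z)
    (ε : ℕ → ℝ) (hεpos : ∀ j, 0 < ε j) (hεlim : Tendsto ε atTop (nhds 0))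
    (α : ℕ → (Fin n → ℂ)) (a : Fin n → ℂ)
    (hα : Tendsto (fun j => piL Λ (1 / ε j) (α j)) atTop (nhds a))
    (p q : Fin n → ℕ) (hpq : wtL Λ p + wtL Λ q ≤ 1) :
    Tendsto (fun j => ((ε j ^ (wtL Λ p + wtL Λ q - 1) : ℝ) : ℂ) *
        wDmulti p (wDbarMulti q (fun w => (P w : ℂ))) (α j)) atTop
      (nhds (wDmulti p (wDbarMulti q (fun w => (P w : ℂ))) a)) := by
  exact stmt_9' Λ hΛpos hΛle P hPsmooth hPhom ε hεpos hεlim α a hα p q hpq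
end

section
/- Let P : ℂⁿ → ℝ be a continuous function with P(0) = 0, set M_P := {(z,w) ∈ ℂⁿ × ℂ : Re(w) + P(z) < 0}, and let 𝒰 := {(z,w) ∈ ℂⁿ × ℂ : Re(w) + |z₁|² + ⋯ + |zₙ|² < 0} be the Siegel half-space. Suppose ψ : M_P → 𝒰 is a biholomorphic map. Then there exists t₀ ∈ ℝ such that liminf_{x→0, x<0} ‖ψ(0,…,0, x + it₀)‖ < +∞; that is, there exist a real number t₀ and a sequence of negative reals x_k → 0 such that the sequence {ψ(0,…,0, x_k + it₀)} is bounded in ℂ^{n+1}. -/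
/-!
On the complex line `z = 0`, which lies in `M_P`, the last coordinate of `ψ` is a holomorphic
self-map `g` of the left half-plane, and the Siegel inequality bounds the other coordinates by
`√‖g‖`. If `‖g (x + t i)‖ → ∞` as `x → 0⁻` for every `t`, then `q = 1 / (1 - g)` is bounded by `1`
and tends to `0` along every horizontal line approaching the imaginary axis. Its horizontal integral
`B w = ∫_{Re w}^0 q` is then a primitive of `-q` (Cauchy's theorem on rectangles pushed to the
boundary) which extends continuously by `0` to the imaginary axis, with `‖B w‖ ≤ |Re w|`.
Phragmén–Lindelöf forces `B = 0`, hence `q = 0`, which is absurd.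
-/

open Set Filter Topology MeasureTheory Complex
open scoped Interval

lemma eq_zero_of_norm_le_mul_abs_re {E : Type*} [NormedAddCommGroup E] [NormedSpace ℂ E]
    {h : ℂ → E} {C : ℝ} (hd : DiffContOnCl ℂ h {w : ℂ | w.re < 0})
    (hbound : ∀ w : ℂ, w.re ≤ 0 → ‖h w‖ ≤ C * |w.re|) {w : ℂ} (hw : w.re ≤ 0) : h w = 0 := by
  have hC : 0 ≤ C := by simpa using (norm_nonneg _).trans (hbound (-1) (by simp))
  have hne : ∀ z : ℂ, 0 ≤ z.re → z + 1 ≠ 0 := fun z hz h0 => by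
    have := congrArg re h0
    simp only [add_re, one_re, zero_re] at this
    linarith
  -- the factor `(z + 1)⁻¹` turns the linear bound into boundedness on the right half-plane
  set f : ℂ → E := fun z => (z + 1)⁻¹ • h (-z)
  have hfd : DiffContOnCl ℂ f {z : ℂ | 0 < z.re} := by
    refine DiffContOnCl.smul ?_ (hd.comp differentiable_neg.diffContOnCl fun z hz => ?_)
    · refine (differentiable_id.add_const 1).diffContOnCl.inv fun z hz => hne z ?_
      simpa using hz
    · simpa using hz
  have hf_le : ∀ z : ℂ, 0 ≤ z.re → ‖f z‖ ≤ C := by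
    intro z hz
    have hre : z.re ≤ ‖z + 1‖ := by
      simpa using (re_le_norm (z + 1)).trans' (by simp : z.re ≤ (z + 1).re)
    have hpos : 0 < ‖z + 1‖ := norm_pos_iff.2 (hne z hz)
    calc ‖f z‖ = ‖h (-z)‖ / ‖z + 1‖ := by simp [f, norm_smul, div_eq_inv_mul]
      _ ≤ C * z.re / ‖z + 1‖ := by
        gcongr
        simpa [abs_of_nonneg hz] using hbound (-z) (by simpa using hz)
      _ ≤ C := by rw [div_le_iff₀ hpos]; gcongr
  have hf_zero := PhragmenLindelof.right_half_plane_of_bounded_on_real (C := 0) (z := -w) hfd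
    ⟨0, two_pos, 0, Asymptotics.IsBigO.of_bound C <| by
      filter_upwards [mem_inf_of_right (mem_principal_self _)] with z (hz : 0 < z.re)
      simpa using hf_le z hz.le⟩
    ⟨C, (eventually_ge_atTop 0).mono fun x hx => hf_le x (by simpa using hx)⟩
    (fun x => by simp [f, norm_le_zero_iff.1 (by simpa using hbound (-(x * I)) (by simp))])
    (by simpa using hw)
  simpa [f, hne (-w) (by simpa using hw)] using hf_zero

section LeftHalfPlane

variable {q : ℂ → ℂ} {C : ℝ}

lemma intervalIntegrable_comp_add_mul_I_of_nonpos (hq : ContinuousOn q {w : ℂ | w.re < 0})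
    (hC : ∀ w : ℂ, w.re < 0 → ‖q w‖ ≤ C) (t : ℝ) {a b : ℝ} (ha : a ≤ 0) (hb : b ≤ 0) :
    IntervalIntegrable (fun s : ℝ => q (s + t * I)) volume a b := by
  wlog hab : a ≤ b generalizing a b
  · exact (this hb ha (le_of_not_ge hab)).symm
  rw [intervalIntegrable_iff_integrableOn_Ioo_of_le hab]
  have hmaps : MapsTo (fun s : ℝ => (s : ℂ) + t * I) (Ioo a b) {w : ℂ | w.re < 0} :=
    fun s hs => by simpa using hs.2.trans_le hb
  refine Integrable.mono' (g := fun _ => C) (integrableOn_const measure_Ioo_lt_top.ne)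
    ((hq.comp (by fun_prop) hmaps).aestronglyMeasurable measurableSet_Ioo) ?_
  exact ae_restrict_of_forall_mem measurableSet_Ioo fun s hs => hC _ (hmaps hs)

/-- On the left half-plane, a primitive of `-q` vanishing on the imaginary axis. -/
noncomputable def integralToImAxis (q : ℂ → ℂ) (w : ℂ) : ℂ :=
  ∫ s in w.re..0, q (s + w.im * I)

@[simp]
lemma integralToImAxis_ofReal_add_ofReal_mul_I (x t : ℝ) :
    integralToImAxis q (x + t * I) = ∫ s in x..0, q (s + t * I) := by
  simp [integralToImAxis]

lemma norm_integralToImAxis_le (hC : ∀ w : ℂ, w.re < 0 → ‖q w‖ ≤ C) {w : ℂ} (hw : w.re ≤ 0) :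
    ‖integralToImAxis q w‖ ≤ C * |w.re| := by
  have hbound : ∀ᵐ s ∂volume, s ∈ Ι w.re 0 → ‖q (s + w.im * I)‖ ≤ C := by
    filter_upwards [Measure.ae_ne volume 0] with s hs0 hs
    rw [uIoc_of_le hw] at hs
    exact hC _ (by simpa using lt_of_le_of_ne hs.2 hs0)
  simpa [integralToImAxis] using intervalIntegral.norm_integral_le_of_norm_le_const_ae hbound

lemma integralToImAxis_sub_integralToImAxis_of_nonpos (hq : ContinuousOn q {w : ℂ | w.re < 0})
    (hC : ∀ w : ℂ, w.re < 0 → ‖q w‖ ≤ C) (t : ℝ) {a b : ℝ} (ha : a ≤ 0) (hb : b ≤ 0) :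
    integralToImAxis q (a + t * I) - integralToImAxis q (b + t * I) =
      ∫ s in a..b, q (s + t * I) := by
  simp only [integralToImAxis_ofReal_add_ofReal_mul_I]
  rw [sub_eq_iff_eq_add]
  exact (intervalIntegral.integral_add_adjacent_intervals
    (intervalIntegrable_comp_add_mul_I_of_nonpos hq hC t ha hb)
    (intervalIntegrable_comp_add_mul_I_of_nonpos hq hC t hb le_rfl)).symm

lemma tendsto_integralToImAxis_nhdsLT_zero (hC : ∀ w : ℂ, w.re < 0 → ‖q w‖ ≤ C) (t : ℝ) :
    Tendsto (fun ε : ℝ => integralToImAxis q (ε + t * I)) (𝓝[<] 0) (𝓝 0) := by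
  have hlim : Tendsto (fun ε : ℝ => C * |ε|) (𝓝[<] 0) (𝓝 0) := by
    simpa using ((continuous_abs.tendsto (0 : ℝ)).const_mul C).mono_left nhdsWithin_le_nhds
  refine squeeze_zero_norm' ?_ hlim
  filter_upwards [self_mem_nhdsWithin] with ε hε
  simpa using norm_integralToImAxis_le hC (w := ε + t * I) (by simpa using hε.le)

lemma tendsto_integral_vertical_nhdsLT_zero (hq : ContinuousOn q {w : ℂ | w.re < 0})
    (hC : ∀ w : ℂ, w.re < 0 → ‖q w‖ ≤ C)
    (hlim : ∀ t : ℝ, Tendsto (fun x : ℝ => q (x + t * I)) (𝓝[<] 0) (𝓝 0)) (t t' : ℝ) :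
    Tendsto (fun ε : ℝ => ∫ y in t..t', q (ε + y * I)) (𝓝[<] 0) (𝓝 0) := by
  have hneg : ∀ᶠ ε : ℝ in 𝓝[<] 0, ∀ y : ℝ, ((ε : ℂ) + y * I).re < 0 :=
    eventually_nhdsWithin_of_forall fun ε hε y => by simpa using hε
  simpa using intervalIntegral.tendsto_integral_filter_of_dominated_convergence (fun _ => C)
    (hneg.mono fun ε hε => (hq.comp_continuous (by fun_prop) hε).aestronglyMeasurable)
    (hneg.mono fun ε hε => ae_of_all _ fun y _ => hC _ (hε y)) intervalIntegrable_const
    (ae_of_all _ fun y _ => hlim y)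

lemma integralToImAxis_sub_integralToImAxis_vertical
    (hq : DifferentiableOn ℂ q {w : ℂ | w.re < 0})
    (hC : ∀ w : ℂ, w.re < 0 → ‖q w‖ ≤ C)
    (hlim : ∀ t : ℝ, Tendsto (fun x : ℝ => q (x + t * I)) (𝓝[<] 0) (𝓝 0)) {x : ℝ} (hx : x < 0)
    (t t' : ℝ) :
    integralToImAxis q (x + t' * I) - integralToImAxis q (x + t * I) =
      -(I * ∫ y in t..t', q (x + y * I)) := by
  set B := integralToImAxis q
  -- Cauchy's theorem on `[x, ε] × [t, t']`, then `ε → 0⁻`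
  have hrect : ∀ᶠ ε : ℝ in 𝓝[<] 0,
      B (x + t * I) - B (x + t' * I) - I * (∫ y in t..t', q (x + y * I)) =
        B (ε + t * I) - B (ε + t' * I) - I * ∫ y in t..t', q (ε + y * I) := by
    filter_upwards [Ioo_mem_nhdsLT hx] with ε hε
    have hsub : uIcc x ε ×ℂ uIcc t t' ⊆ {w : ℂ | w.re < 0} := fun z hz =>
      ((mem_reProdIm.1 hz).1.2.trans_lt (max_lt hx hε.2) :)
    have hcauchy := integral_boundary_rect_eq_zero_of_differentiableOn q (x + t * I)
      (ε + t' * I) (by simpa using hq.mono hsub)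
    simp only [add_re, ofReal_re, mul_re, I_re, mul_zero, ofReal_im, I_im, mul_one, sub_self,
      add_zero, add_im, mul_im, zero_add, smul_eq_mul] at hcauchy
    rw [← integralToImAxis_sub_integralToImAxis_of_nonpos hq.continuousOn hC t hx.le hε.2.le,
      ← integralToImAxis_sub_integralToImAxis_of_nonpos hq.continuousOn hC t' hx.le hε.2.le]
      at hcauchy
    linear_combination hcauchy
  have hlimit : Tendsto (fun ε : ℝ =>
      B (ε + t * I) - B (ε + t' * I) - I * ∫ y in t..t', q (ε + y * I)) (𝓝[<] 0) (𝓝 0) := by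
    simpa only [sub_zero, mul_zero] using ((tendsto_integralToImAxis_nhdsLT_zero hC t).sub
      (tendsto_integralToImAxis_nhdsLT_zero hC t')).sub
      ((tendsto_integral_vertical_nhdsLT_zero hq.continuousOn hC hlim t t').const_mul I)
  linear_combination -tendsto_nhds_unique_of_eventuallyEq tendsto_const_nhds hlimit hrect

lemma integralToImAxis_eq_sub_wedgeIntegral (hq : DifferentiableOn ℂ q {w : ℂ | w.re < 0})
    (hC : ∀ w : ℂ, w.re < 0 → ‖q w‖ ≤ C)
    (hlim : ∀ t : ℝ, Tendsto (fun x : ℝ => q (x + t * I)) (𝓝[<] 0) (𝓝 0)) {w z : ℂ}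
    (hw : w.re < 0) (hz : z.re < 0) :
    integralToImAxis q z = integralToImAxis q w - wedgeIntegral w z q := by
  have hhor := integralToImAxis_sub_integralToImAxis_of_nonpos hq.continuousOn hC w.im hw.le hz.le
  have hver := integralToImAxis_sub_integralToImAxis_vertical hq hC hlim hz w.im z.im
  rw [re_add_im] at hhor hver
  rw [wedgeIntegral, smul_eq_mul]
  linear_combination hver - hhor

lemma hasDerivAt_integralToImAxis (hq : DifferentiableOn ℂ q {w : ℂ | w.re < 0})
    (hC : ∀ w : ℂ, w.re < 0 → ‖q w‖ ≤ C)
    (hlim : ∀ t : ℝ, Tendsto (fun x : ℝ => q (x + t * I)) (𝓝[<] 0) (𝓝 0)) {w : ℂ}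
    (hw : w.re < 0) : HasDerivAt (integralToImAxis q) (-q w) w := by
  have hopen : IsOpen {w : ℂ | w.re < 0} := isOpen_lt continuous_re continuous_const
  obtain ⟨r, hr, hball⟩ := Metric.isOpen_iff.1 hopen w hw
  have hwedge := (hq.mono hball).isConservativeOn.hasDerivAt_wedgeIntegral
    (hq.continuousOn.mono hball) (Metric.mem_ball_self hr)
  refine (hwedge.const_sub (integralToImAxis q w)).congr_of_eventuallyEq ?_
  filter_upwards [hopen.mem_nhds hw] with z hz
  exact integralToImAxis_eq_sub_wedgeIntegral hq hC hlim hw hz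

lemma diffContOnCl_integralToImAxis (hq : DifferentiableOn ℂ q {w : ℂ | w.re < 0})
    (hC : ∀ w : ℂ, w.re < 0 → ‖q w‖ ≤ C)
    (hlim : ∀ t : ℝ, Tendsto (fun x : ℝ => q (x + t * I)) (𝓝[<] 0) (𝓝 0)) :
    DiffContOnCl ℂ (integralToImAxis q) {w : ℂ | w.re < 0} := by
  refine ⟨fun w hw => (hasDerivAt_integralToImAxis hq hC hlim hw).differentiableAt
    |>.differentiableWithinAt, ?_⟩
  rw [closure_setOfPred_re_lt]
  intro w (hw : w.re ≤ 0)
  rcases hw.lt_or_eq with hlt | hre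
  · exact (hasDerivAt_integralToImAxis hq hC hlim hlt).continuousAt.continuousWithinAt
  · have hzero : integralToImAxis q w = 0 := by simp [integralToImAxis, hre]
    have hbound : Tendsto (fun z : ℂ => C * |z.re|) (𝓝[{z | z.re ≤ 0}] w) (𝓝 0) :=
      ((by fun_prop : Continuous fun z : ℂ => C * |z.re|).tendsto' w 0 (by simp [hre])).mono_left
        nhdsWithin_le_nhds
    rw [ContinuousWithinAt, hzero]
    refine squeeze_zero_norm' ?_ hbound
    filter_upwards [self_mem_nhdsWithin] with z hz using norm_integralToImAxis_le hC hz

theorem eq_zero_of_norm_le_of_tendsto_horizontal (hq : DifferentiableOn ℂ q {w : ℂ | w.re < 0})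
    (hC : ∀ w : ℂ, w.re < 0 → ‖q w‖ ≤ C)
    (hlim : ∀ t : ℝ, Tendsto (fun x : ℝ => q (x + t * I)) (𝓝[<] 0) (𝓝 0)) {w : ℂ}
    (hw : w.re < 0) : q w = 0 := by
  have hB : integralToImAxis q =ᶠ[𝓝 w] fun _ => 0 := by
    filter_upwards [(isOpen_lt continuous_re continuous_const).mem_nhds hw] with z (hz : z.re < 0)
    exact eq_zero_of_norm_le_mul_abs_re (diffContOnCl_integralToImAxis hq hC hlim)
      (fun _ => norm_integralToImAxis_le hC) hz.le
  exact neg_eq_zero.1 <| (hasDerivAt_integralToImAxis hq hC hlim hw).unique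
    ((hasDerivAt_const w 0).congr_of_eventuallyEq hB)

end LeftHalfPlane

lemma exists_seq_tendsto_nhdsLT_le_of_not_tendsto_atTop {f : ℝ → ℝ} {a : ℝ}
    (h : ¬ Tendsto f (𝓝[<] a) atTop) :
    ∃ x : ℕ → ℝ, (∀ k, x k < a) ∧ Tendsto x atTop (𝓝 a) ∧ ∃ C, ∀ k, f (x k) ≤ C := by
  obtain ⟨C, hC⟩ : ∃ C, ∃ᶠ x in 𝓝[<] a, f x < C := by simpa [tendsto_atTop, not_le] using h
  obtain ⟨x, hx, hfx⟩ := exists_seq_forall_of_frequently (hC.and_eventually self_mem_nhdsWithin)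
  exact ⟨x, fun k => (hfx k).2, hx.mono_right nhdsWithin_le_nhds, C, fun k => (hfx k).1.le⟩

lemma exists_not_tendsto_norm_atTop_of_mapsTo {g : ℂ → ℂ}
    (hg : DifferentiableOn ℂ g {w : ℂ | w.re < 0})
    (hmaps : MapsTo g {w : ℂ | w.re < 0} {w : ℂ | w.re < 0}) :
    ∃ t : ℝ, ¬ Tendsto (fun x : ℝ => ‖g (x + t * I)‖) (𝓝[<] 0) atTop := by
  by_contra! hblow
  have hlarge : ∀ w : ℂ, w.re < 0 → 1 < ‖1 - g w‖ := fun w hw =>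
    have hgw : (g w).re < 0 := hmaps hw
    calc 1 < 1 - (g w).re := by linarith
      _ = (1 - g w).re := by simp
      _ ≤ ‖1 - g w‖ := re_le_norm _
  have hne : ∀ w : ℂ, w.re < 0 → 1 - g w ≠ 0 := fun w hw =>
    norm_pos_iff.1 (one_pos.trans (hlarge w hw))
  have hq0 := eq_zero_of_norm_le_of_tendsto_horizontal (q := fun w => (1 - g w)⁻¹) (C := 1)
    (((differentiableOn_const 1).sub hg).inv hne)
    (fun w hw => by rw [norm_inv]; exact inv_le_one_of_one_le₀ (hlarge w hw).le)
    (fun t => tendsto_inv₀_cobounded.comp <| (tendsto_const_sub_cobounded 1).comp <|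
      tendsto_norm_atTop_iff_cobounded.1 (hblow t))
    (show (-1 : ℂ).re < 0 by simp)
  exact hne (-1) (by simp) (inv_eq_zero.1 hq0)

lemma norm_le_max_sqrt_of_re_add_sum_lt {ι : Type*} [Fintype ι] {p : (ι → ℂ) × ℂ} {C : ℝ}
    (hp : p.2.re + ∑ j, ‖p.1 j‖ ^ 2 < 0) (hC : ‖p.2‖ ≤ C) : ‖p‖ ≤ max (√C) C := by
  have hsum : ∑ j, ‖p.1 j‖ ^ 2 ≤ C := by
    linarith [neg_le_abs p.2.re, abs_re_le_norm p.2]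
  have hfst : ‖p.1‖ ≤ √C := (pi_norm_le_iff_of_nonneg (Real.sqrt_nonneg C)).2 fun j =>
    Real.le_sqrt_of_sq_le <| (Finset.single_le_sum (f := fun j => ‖p.1 j‖ ^ 2)
      (fun j _ => sq_nonneg _) (Finset.mem_univ j)).trans hsum
  rw [Prod.norm_def]
  exact max_le_max hfst hC

theorem stmt_11_general (n : ℕ) (P : (Fin n → ℂ) → ℝ) (hP0 : P 0 = 0)
    (MP U : Set ((Fin n → ℂ) × ℂ))
    (hMP : MP = {p | p.2.re + P p.1 < 0})
    (hU : U = {p | p.2.re + ∑ j, ‖p.1 j‖ ^ 2 < 0})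
    (ψ : (Fin n → ℂ) × ℂ → (Fin n → ℂ) × ℂ)
    (hψdiff : DifferentiableOn ℂ ψ MP) (hψbij : Set.BijOn ψ MP U) :
    ∃ t₀ : ℝ, ∃ x : ℕ → ℝ, (∀ k, x k < 0) ∧ Tendsto x atTop (nhds 0) ∧
      ∃ C : ℝ, ∀ k, ‖ψ ((0 : Fin n → ℂ), (x k : ℂ) + (t₀ : ℂ) * Complex.I)‖ ≤ C := by
  have hslice : MapsTo (fun w : ℂ => ((0 : Fin n → ℂ), w)) {w : ℂ | w.re < 0} MP :=
    fun w hw => by simpa [hMP, hP0] using hw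
  have hsiegel : ∀ w : ℂ, w.re < 0 →
      (ψ (0, w)).2.re + ∑ j, ‖(ψ (0, w)).1 j‖ ^ 2 < 0 := fun w hw => by
    simpa [hU] using hψbij.mapsTo (hslice hw)
  set g : ℂ → ℂ := fun w => (ψ (0, w)).2
  have hg : DifferentiableOn ℂ g {w : ℂ | w.re < 0} := differentiable_snd.comp_differentiableOn
    (hψdiff.comp ((differentiable_const _).prodMk differentiable_id).differentiableOn hslice)
  have hgmaps : MapsTo g {w : ℂ | w.re < 0} {w : ℂ | w.re < 0} := fun w (hw : w.re < 0) => by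
    show (ψ (0, w)).2.re < 0
    linarith [hsiegel w hw, Finset.sum_nonneg fun j (_ : j ∈ Finset.univ) =>
      sq_nonneg ‖(ψ (0, w)).1 j‖]
  obtain ⟨t₀, ht₀⟩ := exists_not_tendsto_norm_atTop_of_mapsTo hg hgmaps
  obtain ⟨x, hx, hxlim, C, hC⟩ := exists_seq_tendsto_nhdsLT_le_of_not_tendsto_atTop ht₀
  exact ⟨t₀, x, hx, hxlim, max (√C) C, fun k =>
    norm_le_max_sqrt_of_re_add_sum_lt (hsiegel _ (by simpa using hx k)) (hC k)⟩

/-- If `ψ` is a biholomorphism from `M_P = {Re w + P(z) < 0}` (with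
`P` continuous, `P(0)=0`) onto the Siegel half-space `𝒰`, then for some `t₀ ∈ ℝ` the
liminf of `‖ψ(0', x + it₀)‖` as `x → 0⁻` is finite: there is a sequence of negative reals
`x_k → 0` along which `ψ(0', x_k + it₀)` stays bounded. -/
theorem stmt_11 (n : ℕ) (P : (Fin n → ℂ) → ℝ) (hPcont : Continuous P) (hP0 : P 0 = 0)
    (MP U : Set ((Fin n → ℂ) × ℂ))
    (hMP : MP = {p | p.2.re + P p.1 < 0})
    (hU : U = {p | p.2.re + ∑ j, ‖p.1 j‖ ^ 2 < 0})
    (ψ : (Fin n → ℂ) × ℂ → (Fin n → ℂ) × ℂ)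
    (hψdiff : DifferentiableOn ℂ ψ MP) (hψbij : Set.BijOn ψ MP U)
    (hψinv : ∃ χ : (Fin n → ℂ) × ℂ → (Fin n → ℂ) × ℂ,
      DifferentiableOn ℂ χ U ∧ Set.InvOn χ ψ MP U) :
    ∃ t₀ : ℝ, ∃ x : ℕ → ℝ, (∀ k, x k < 0) ∧ Tendsto x atTop (nhds 0) ∧
      ∃ C : ℝ, ∀ k, ‖ψ ((0 : Fin n → ℂ), (x k : ℂ) + (t₀ : ℂ) * Complex.I)‖ ≤ C :=
  stmt_11_general n P hP0 MP U hMP hU ψ hψdiff hψbij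
end
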